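/- arXiv:1501.02206 — 2 statements merged into one kernel-verified Lean document; each statement's English description precedes it below -/
import Mathlib

section
/- For all integers l ≥ 2 and all real numbers θ > 0 and n ≥ 1: ∑_{k=0}^{l-1} 3^k (n-1)^k C(l-1,k) θ^{l-2+2k}/(l-2+2k)! ≤ (θ^{l-2}/(l-2)!) · exp(3θ²(n-1)/(l-1)). -/
/-- The combinatorial estimate
`∑_{k=0}^{l-1} 3^k (n-1)^k C(l-1,k) θ^{l-2+2k}/(l-2+2k)!
  ≤ (θ^{l-2}/(l-2)!) · exp(3θ²(n-1)/(l-1))`. -/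
theorem stmt13 (l n : ℕ) (hl : 2 ≤ l) (hn : 1 ≤ n) (θ : ℝ) (hθ : 0 < θ) :
    ∑ k ∈ Finset.range l,
        (3 : ℝ) ^ k * ((n : ℝ) - 1) ^ k * ((l - 1).choose k) * θ ^ (l - 2 + 2 * k) /
          (l - 2 + 2 * k).factorial
      ≤ θ ^ (l - 2) / (l - 2).factorial *
          Real.exp (3 * θ ^ 2 * ((n : ℝ) - 1) / ((l : ℝ) - 1)) := by
  obtain ⟨m, rfl⟩ : ∃ m, l = m + 2 := ⟨l - 2, by omega⟩
  have hm1 : (m + 2 : ℕ) - 1 = m + 1 := by omega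
  have hm2 : (m + 2 : ℕ) - 2 = m := by omega
  rw [hm1, hm2]
  have hcast : ((m + 2 : ℕ) : ℝ) - 1 = ((m + 1 : ℕ) : ℝ) := by push_cast; ring
  rw [hcast]
  set M : ℝ := ((m + 1 : ℕ) : ℝ) with hM
  have hMpos : 0 < M := by positivity
  set y : ℝ := 3 * θ ^ 2 * ((n : ℝ) - 1) / M ^ 2 with hy
  have hn1 : (0 : ℝ) ≤ (n : ℝ) - 1 := by
    have : (1 : ℝ) ≤ n := by exact_mod_cast hn
    linarith
  have hy0 : 0 ≤ y := by positivity
  -- step 1: termwise bound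
  have step1 : ∑ k ∈ Finset.range (m + 2),
      (3 : ℝ) ^ k * ((n : ℝ) - 1) ^ k * ((m + 1).choose k) * θ ^ (m + 2 * k) /
        (m + 2 * k).factorial
      ≤ θ ^ m / m.factorial * ∑ k ∈ Finset.range (m + 2), y ^ k * ((m + 1).choose k) := by
    rw [Finset.mul_sum]
    refine Finset.sum_le_sum fun k _ => ?_
    have hfact : (m.factorial : ℝ) * M ^ (2 * k) ≤ ((m + 2 * k).factorial : ℝ) := by
      rw [hM]
      exact_mod_cast Nat.factorial_mul_pow_le_factorial (m := m) (n := 2 * k)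
    have key : (3 : ℝ) ^ k * ((n : ℝ) - 1) ^ k * ((m + 1).choose k) * θ ^ (m + 2 * k) /
        (m + 2 * k).factorial
        ≤ (3 : ℝ) ^ k * ((n : ℝ) - 1) ^ k * ((m + 1).choose k) * θ ^ (m + 2 * k) /
          ((m.factorial : ℝ) * M ^ (2 * k)) := by
      apply div_le_div_of_nonneg_left _ (by positivity) hfact
      positivity
    refine key.trans (le_of_eq ?_)
    rw [hy, div_pow, mul_pow, mul_pow]
    have hMne : M ≠ 0 := ne_of_gt hMpos
    field_simp
    ring
  refine step1.trans ?_
  -- step 2: binomial theorem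
  have step2 : ∑ k ∈ Finset.range (m + 2), y ^ k * ((m + 1).choose k) = (y + 1) ^ (m + 1) := by
    rw [add_pow]
    simp [mul_comm]
  rw [step2]
  -- step 3: exponential bound
  have step3 : (y + 1) ^ (m + 1) ≤ Real.exp (3 * θ ^ 2 * ((n : ℝ) - 1) / M) := by
    have h1 : (y + 1) ^ (m + 1) ≤ Real.exp y ^ (m + 1) :=
      pow_le_pow_left₀ (by linarith) (Real.add_one_le_exp y) _
    refine h1.trans (le_of_eq ?_)
    rw [← Real.exp_nat_mul]
    congr 1
    rw [hy, hM]
    push_cast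
    field_simp
  have hpos : 0 ≤ θ ^ m / m.factorial := by positivity
  exact mul_le_mul_of_nonneg_left step3 hpos
end

section
/- Let k, n be integers with 0 ≤ k ≤ n, let v ∈ {0,1}^n with |v| = k, and let a, b ≥ 0. Then ∑_{Δ ∈ {0,1}^n} m(Δ,a)²·m(v+Δ,b) = e^{nb}·((1/2)cosh(2a) − (1/2)e^{-2b})^k · ((1/2)cosh(2a) + (1/2)e^{-2b})^{n-k}, where m(w,t) = (sinh t)^{|w|}(cosh t)^{n-|w|} and v+Δ is coordinatewise XOR. -/
/-- Hamming weight of a hypercube vertex. -/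
def wt (n : ℕ) (v : Fin n → Bool) : ℕ := (Finset.univ.filter fun i => v i = true).card

/-- `m(v,t) = (sinh t)^|v| (cosh t)^(n-|v|)`. -/
noncomputable def m (n : ℕ) (v : Fin n → Bool) (t : ℝ) : ℝ :=
  Real.sinh t ^ wt n v * Real.cosh t ^ (n - wt n v)

noncomputable def m1 (d : Bool) (t : ℝ) : ℝ := if d then Real.sinh t else Real.cosh t

lemma card_neg (n : ℕ) (v : Fin n → Bool) :
    (Finset.univ.filter fun i => ¬ v i = true).card = n - wt n v := by
  have h := Finset.card_filter_add_card_filter_not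
    (s := (Finset.univ : Finset (Fin n))) (p := fun i => v i = true)
  simp only [Finset.card_univ, Fintype.card_fin] at h
  unfold wt
  omega

lemma m_eq_prod (n : ℕ) (v : Fin n → Bool) (t : ℝ) :
    m n v t = ∏ i, m1 (v i) t := by
  unfold m m1
  rw [Finset.prod_ite, Finset.prod_const, Finset.prod_const]
  congr 2
  exact (card_neg n v).symm

lemma key_true (a b : ℝ) :
    Real.cosh a ^ 2 * Real.sinh b + Real.sinh a ^ 2 * Real.cosh b
      = Real.exp b * ((1/2) * Real.cosh (2*a) - (1/2) * Real.exp (-2*b)) := by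
  simp only [Real.cosh_eq, Real.sinh_eq, show (2:ℝ)*a = a+a by ring,
    show (-2:ℝ)*b = -(b+b) by ring, Real.exp_neg, Real.exp_add]
  have hb := Real.exp_ne_zero b
  have hA := Real.exp_ne_zero a
  field_simp
  ring

lemma key_false (a b : ℝ) :
    Real.cosh a ^ 2 * Real.cosh b + Real.sinh a ^ 2 * Real.sinh b
      = Real.exp b * ((1/2) * Real.cosh (2*a) + (1/2) * Real.exp (-2*b)) := by
  simp only [Real.cosh_eq, Real.sinh_eq, show (2:ℝ)*a = a+a by ring,
    show (-2:ℝ)*b = -(b+b) by ring, Real.exp_neg, Real.exp_add]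
  have hb := Real.exp_ne_zero b
  have hA := Real.exp_ne_zero a
  field_simp
  ring

/-- For `|v| = k`,
`∑_Δ m(Δ,a)² m(v+Δ,b) = e^{nb} ((1/2)cosh 2a − (1/2)e^{-2b})^k ((1/2)cosh 2a + (1/2)e^{-2b})^{n-k}`,
where `v+Δ` is coordinatewise XOR. -/
theorem stmt14 (n k : ℕ) (hk : k ≤ n) (v : Fin n → Bool) (hv : wt n v = k)
    (a b : ℝ) (ha : 0 ≤ a) (hb : 0 ≤ b) :
    ∑ Δ : Fin n → Bool, (m n Δ a) ^ 2 * m n (fun i => xor (v i) (Δ i)) b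
      = Real.exp (n * b) *
          ((1 / 2) * Real.cosh (2 * a) - (1 / 2) * Real.exp (-2 * b)) ^ k *
          ((1 / 2) * Real.cosh (2 * a) + (1 / 2) * Real.exp (-2 * b)) ^ (n - k) := by
  have step1 : ∀ Δ : Fin n → Bool,
      (m n Δ a) ^ 2 * m n (fun i => xor (v i) (Δ i)) b
        = ∏ i, (m1 (Δ i) a ^ 2 * m1 (xor (v i) (Δ i)) b) := by
    intro Δ
    rw [m_eq_prod, m_eq_prod, ← Finset.prod_pow, ← Finset.prod_mul_distrib]
  simp only [step1]
  have hswap := Finset.prod_univ_sum (fun _ : Fin n => (Finset.univ : Finset Bool))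
    (fun i d => m1 d a ^ 2 * m1 (xor (v i) d) b)
  rw [← Fintype.piFinset_univ, ← hswap]
  have step2 : ∀ i, (∑ d : Bool, m1 d a ^ 2 * m1 (xor (v i) d) b)
      = Real.exp b * (if v i then ((1/2) * Real.cosh (2*a) - (1/2) * Real.exp (-2*b))
          else ((1/2) * Real.cosh (2*a) + (1/2) * Real.exp (-2*b))) := by
    intro i
    cases hvi : v i
    · have h : (∑ d : Bool, m1 d a ^ 2 * m1 (xor (v i) d) b)
          = Real.cosh a ^ 2 * Real.cosh b + Real.sinh a ^ 2 * Real.sinh b := by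
        simp [hvi, m1, Fintype.sum_bool]; try ring
      rw [hvi] at h
      rw [h, if_neg (by simp), key_false]
    · have h : (∑ d : Bool, m1 d a ^ 2 * m1 (xor (v i) d) b)
          = Real.cosh a ^ 2 * Real.sinh b + Real.sinh a ^ 2 * Real.cosh b := by
        simp [hvi, m1, Fintype.sum_bool]; try ring
      rw [hvi] at h
      rw [h, if_pos rfl, key_true]
  simp only [step2]
  rw [Finset.prod_mul_distrib, Finset.prod_const, Finset.prod_ite, Finset.prod_const,
    Finset.prod_const, Finset.card_univ, Fintype.card_fin, ← Real.exp_nat_mul]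
  have h1 : (Finset.univ.filter fun i => v i = true).card = k := hv
  have h2 : (Finset.univ.filter fun i => ¬ v i = true).card = n - k := by
    rw [card_neg, hv]
  simp only [h1, h2]
  ring
end
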